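/- Let C ⊆ {0,1}^n be a code containing 0^n with minimum distance 5 whose weight-5 codewords form a 2-(n,5,(n−3)/3) design (n ≥ 7), let x ∈ C have weight i, let m,l ∈ supp(x), and let S = A ∪ B ∪ Γ be the set of codewords at distance 5 from x with zeros at both m and l (of weights i−1, i−3, i−5 respectively). Then the zero-coordinate sets in supp(x)\{m,l} of distinct elements of S are pairwise disjoint, so the total count of such zero-coordinate incidences is |A| + 2|B| + 3|Γ| and this is at most i − 2. -/
import Mathlib

open Finset

def supp {n : ℕ} (x : Fin n → ZMod 2) : Finset (Fin n) :=
  Finset.univ.filter (fun i => x i ≠ 0)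

lemma zmod2_ne_iff (a b : ZMod 2) : a ≠ b ↔ (a ≠ 0 ∧ b = 0) ∨ (a = 0 ∧ b ≠ 0) := by
  revert a b; decide

lemma zmod2_three (a b c : ZMod 2) (h : b ≠ c) :
    (a ≠ b ∨ a ≠ c) ∧ ¬(a ≠ b ∧ a ≠ c) := by
  revert h; revert a b c; decide

/-- Distance ≤ 4 for two codewords at distance 5 from x sharing three zeros in supp x. -/
lemma dist_le_four {n : ℕ} (x u v : Fin n → ZMod 2)
    (hdu : hammingDist x u = 5) (hdv : hammingDist x v = 5)
    (m l j : Fin n) (hml : m ≠ l) (hmj : m ≠ j) (hlj : l ≠ j)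
    (hxm : x m ≠ 0) (hxl : x l ≠ 0) (hxj : x j ≠ 0)
    (hum : u m = 0) (hul : u l = 0) (huj : u j = 0)
    (hvm : v m = 0) (hvl : v l = 0) (hvj : v j = 0) :
    hammingDist u v ≤ 4 := by
  classical
  set Du : Finset (Fin n) := Finset.univ.filter (fun k => x k ≠ u k) with hDu
  set Dv : Finset (Fin n) := Finset.univ.filter (fun k => x k ≠ v k) with hDv
  set Duv : Finset (Fin n) := Finset.univ.filter (fun k => u k ≠ v k) with hDuv
  have hcu : Du.card = 5 := hdu
  have hcv : Dv.card = 5 := hdv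
  have hduv : hammingDist u v = Duv.card := rfl
  have hsub : Duv ⊆ (Du ∪ Dv) \ (Du ∩ Dv) := by
    intro k hk
    simp only [hDuv, hDu, hDv, mem_filter, mem_univ, true_and, mem_sdiff, mem_union,
      mem_inter, not_and] at hk ⊢
    have := zmod2_three (x k) (u k) (v k) hk
    tauto
  have hmem : ({m, l, j} : Finset (Fin n)) ⊆ Du ∩ Dv := by
    intro k hk
    simp only [mem_insert, mem_singleton] at hk
    simp only [mem_inter, hDu, hDv, mem_filter, mem_univ, true_and]
    rcases hk with rfl | rfl | rfl
    · exact ⟨by rw [hum]; exact hxm, by rw [hvm]; exact hxm⟩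
    · exact ⟨by rw [hul]; exact hxl, by rw [hvl]; exact hxl⟩
    · exact ⟨by rw [huj]; exact hxj, by rw [hvj]; exact hxj⟩
  have hcard3 : 3 ≤ (Du ∩ Dv).card := by
    have h3 : ({m, l, j} : Finset (Fin n)).card = 3 := by
      rw [card_insert_of_notMem (by simp [hml, hmj]), card_insert_of_notMem (by simp [hlj]),
        card_singleton]
    calc 3 = ({m, l, j} : Finset (Fin n)).card := h3.symm
      _ ≤ (Du ∩ Dv).card := card_le_card hmem
  have h1 : Duv.card ≤ (Du ∪ Dv).card - (Du ∩ Dv).card := by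
    have := card_le_card hsub
    rwa [card_sdiff_of_subset (inter_subset_union)] at this
  have h2 : (Du ∪ Dv).card + (Du ∩ Dv).card = Du.card + Dv.card :=
    card_union_add_card_inter _ _
  omega

/-- Key structural lemma about a single codeword at distance 5 from x, zero at m and l. -/
lemma key_struct {n i : ℕ} (x u : Fin n → ZMod 2) (hxi : hammingNorm x = i)
    (m l : Fin n) (hxm : x m ≠ 0) (hxl : x l ≠ 0) (hml : m ≠ l)
    (hd : hammingDist x u = 5) (hum : u m = 0) (hul : u l = 0) :
    ∃ a, 2 ≤ a ∧ a ≤ i ∧ hammingNorm u + 2 * a = i + 5 ∧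
      (((supp x) \ {m, l}).filter (fun k => u k = 0)).card + 2 = a := by
  classical
  set P : Finset (Fin n) := Finset.univ.filter (fun k => x k ≠ 0 ∧ u k = 0) with hP
  set Q : Finset (Fin n) := Finset.univ.filter (fun k => x k = 0 ∧ u k ≠ 0) with hQ
  set R : Finset (Fin n) := Finset.univ.filter (fun k => x k ≠ 0 ∧ u k ≠ 0) with hR
  refine ⟨P.card, ?_, ?_, ?_, ?_⟩
  · -- {m, l} ⊆ P
    have hsub : ({m, l} : Finset (Fin n)) ⊆ P := by
      intro k hk
      simp only [mem_insert, mem_singleton] at hk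
      simp only [hP, mem_filter, mem_univ, true_and]
      rcases hk with rfl | rfl
      · exact ⟨hxm, hum⟩
      · exact ⟨hxl, hul⟩
    calc 2 = ({m, l} : Finset (Fin n)).card := (card_pair hml).symm
      _ ≤ P.card := card_le_card hsub
  · -- P ⊆ supp x
    have : P ⊆ supp x := by
      intro k hk
      simp only [hP, mem_filter, mem_univ, true_and] at hk
      simp only [supp, mem_filter, mem_univ, true_and]
      exact hk.1
    calc P.card ≤ (supp x).card := card_le_card this
      _ = i := hxi
  · -- hammingNorm u + 2 * P.card = i + 5
    have hPQ : Finset.univ.filter (fun k => x k ≠ u k) = P ∪ Q := by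
      ext k
      simp only [mem_filter, mem_univ, true_and, mem_union, hP, hQ]
      exact zmod2_ne_iff (x k) (u k)
    have hPQdisj : Disjoint P Q := by
      rw [disjoint_left]
      intro k hk hk'
      simp only [hP, hQ, mem_filter, mem_univ, true_and] at hk hk'
      exact hk.1 hk'.1
    have h5 : P.card + Q.card = 5 := by
      rw [← card_union_of_disjoint hPQdisj, ← hPQ]; exact hd
    have hsuppx : supp x = P ∪ R := by
      ext k
      simp only [supp, mem_filter, mem_univ, true_and, mem_union, hP, hR]
      by_cases h : u k = 0 <;> simp [h] <;> tauto
    have hPRdisj : Disjoint P R := by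
      rw [disjoint_left]
      intro k hk hk'
      simp only [hP, hR, mem_filter, mem_univ, true_and] at hk hk'
      exact hk'.2 hk.2
    have hi : P.card + R.card = i := by
      rw [← card_union_of_disjoint hPRdisj, ← hsuppx, ← hxi]; rfl
    have hsuppu : Finset.univ.filter (fun k => u k ≠ 0) = R ∪ Q := by
      ext k
      simp only [mem_filter, mem_univ, true_and, mem_union, hR, hQ]
      by_cases h : x k = 0 <;> simp [h] <;> tauto
    have hRQdisj : Disjoint R Q := by
      rw [disjoint_left]
      intro k hk hk'
      simp only [hR, hQ, mem_filter, mem_univ, true_and] at hk hk'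
      exact hk.1 hk'.1
    have hu : hammingNorm u = R.card + Q.card := by
      rw [← card_union_of_disjoint hRQdisj, ← hsuppu]; rfl
    omega
  · -- zero count
    have hZ : ((supp x) \ {m, l}).filter (fun k => u k = 0) = P \ {m, l} := by
      ext k
      simp only [mem_filter, mem_sdiff, supp, mem_filter, mem_univ, true_and, hP]
      tauto
    have hsub : ({m, l} : Finset (Fin n)) ⊆ P := by
      intro k hk
      simp only [mem_insert, mem_singleton] at hk
      simp only [hP, mem_filter, mem_univ, true_and]
      rcases hk with rfl | rfl
      · exact ⟨hxm, hum⟩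
      · exact ⟨hxl, hul⟩
    rw [hZ, card_sdiff_of_subset hsub, card_pair hml]
    have := card_le_card hsub
    rw [card_pair hml] at this
    omega

theorem stmt18 {n i : ℕ} (hn : 7 ≤ n) (C : Finset (Fin n → ZMod 2))
    (h0 : (0 : Fin n → ZMod 2) ∈ C)
    (hmin : ∀ u ∈ C, ∀ v ∈ C, u ≠ v → 5 ≤ hammingDist u v)
    (hdesign : ∀ r s : Fin n, r ≠ s →
      (C.filter (fun y => hammingNorm y = 5 ∧ y r ≠ 0 ∧ y s ≠ 0)).card = (n - 3) / 3)
    (x : Fin n → ZMod 2) (hx : x ∈ C) (hxi : hammingNorm x = i)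
    (m l : Fin n) (hm : m ∈ supp x) (hl : l ∈ supp x) (hml : m ≠ l)
    (S : Finset (Fin n → ZMod 2))
    (hS : S = C.filter (fun y => hammingDist x y = 5 ∧ y m = 0 ∧ y l = 0 ∧
      (hammingNorm y = i - 1 ∨ hammingNorm y = i - 3 ∨ hammingNorm y = i - 5))) :
    (∀ u ∈ S, ∀ v ∈ S, u ≠ v →
      ∀ j ∈ supp x \ {m, l}, ¬(u j = 0 ∧ v j = 0)) ∧
    (C.filter (fun y => hammingDist x y = 5 ∧ y m = 0 ∧ y l = 0 ∧
        hammingNorm y = i - 1)).card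
      + 2 * (C.filter (fun y => hammingDist x y = 5 ∧ y m = 0 ∧ y l = 0 ∧
        hammingNorm y = i - 3)).card
      + 3 * (C.filter (fun y => hammingDist x y = 5 ∧ y m = 0 ∧ y l = 0 ∧
        hammingNorm y = i - 5)).card ≤ i - 2 := by
  classical
  have hxm : x m ≠ 0 := by simpa [supp] using hm
  have hxl : x l ≠ 0 := by simpa [supp] using hl
  -- first conjunct
  have hdisj : ∀ u ∈ S, ∀ v ∈ S, u ≠ v →
      ∀ j ∈ supp x \ {m, l}, ¬(u j = 0 ∧ v j = 0) := by
    intro u hu v hv huv j hj ⟨huj, hvj⟩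
    rw [hS, mem_filter] at hu hv
    obtain ⟨huC, hdu, hum, hul, -⟩ := hu
    obtain ⟨hvC, hdv, hvm, hvl, -⟩ := hv
    simp only [mem_sdiff, mem_insert, mem_singleton, supp, mem_filter, mem_univ, true_and,
      not_or] at hj
    obtain ⟨hxj, hjm, hjl⟩ := hj
    have h4 := dist_le_four x u v hdu hdv m l j hml (fun h => hjm h.symm)
      (fun h => hjl h.symm) hxm hxl hxj hum hul huj hvm hvl hvj
    have := hmin u huC v hvC huv
    omega
  refine ⟨hdisj, ?_⟩
  -- second conjunct
  set A := C.filter (fun y => hammingDist x y = 5 ∧ y m = 0 ∧ y l = 0 ∧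
      hammingNorm y = i - 1) with hA
  set B := C.filter (fun y => hammingDist x y = 5 ∧ y m = 0 ∧ y l = 0 ∧
      hammingNorm y = i - 3) with hB
  set G := C.filter (fun y => hammingDist x y = 5 ∧ y m = 0 ∧ y l = 0 ∧
      hammingNorm y = i - 5) with hG
  set Z : (Fin n → ZMod 2) → Finset (Fin n) :=
    fun u => ((supp x) \ {m, l}).filter (fun k => u k = 0) with hZdef
  -- card facts
  have hkey : ∀ u, hammingDist x u = 5 → u m = 0 → u l = 0 →
      ∃ a, 2 ≤ a ∧ a ≤ i ∧ hammingNorm u + 2 * a = i + 5 ∧ (Z u).card + 2 = a :=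
    fun u hd hum hul => key_struct x u hxi m l hxm hxl hml hd hum hul
  have hcards : ∀ u, (u ∈ A → (Z u).card = 1) ∧ (u ∈ B → (Z u).card = 2) ∧
      (u ∈ G → (Z u).card = 3) := by
    intro u
    refine ⟨?_, ?_, ?_⟩ <;> intro hu
    · rw [hA, mem_filter] at hu
      obtain ⟨-, hd, hum, hul, hw⟩ := hu
      obtain ⟨a, h1, h2, h3, h4⟩ := hkey u hd hum hul
      omega
    · rw [hB, mem_filter] at hu
      obtain ⟨-, hd, hum, hul, hw⟩ := hu
      obtain ⟨a, h1, h2, h3, h4⟩ := hkey u hd hum hul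
      omega
    · rw [hG, mem_filter] at hu
      obtain ⟨-, hd, hum, hul, hw⟩ := hu
      obtain ⟨a, h1, h2, h3, h4⟩ := hkey u hd hum hul
      omega
  -- S is the union
  have hSU : S = A ∪ B ∪ G := by
    rw [hS, hA, hB, hG]
    ext u
    simp only [mem_union, mem_filter]
    tauto
  have hAB : Disjoint A B := by
    rw [disjoint_left]
    intro u hu hu'
    have h1 := (hcards u).1 hu
    have h2 := (hcards u).2.1 hu'
    omega
  have hAG : Disjoint A G := by
    rw [disjoint_left]
    intro u hu hu'
    have h1 := (hcards u).1 hu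
    have h2 := (hcards u).2.2 hu'
    omega
  have hBG : Disjoint B G := by
    rw [disjoint_left]
    intro u hu hu'
    have h1 := (hcards u).2.1 hu
    have h2 := (hcards u).2.2 hu'
    omega
  -- the sum over S of card (Z u)
  have hsum : ∑ u ∈ S, (Z u).card = A.card + 2 * B.card + 3 * G.card := by
    rw [hSU, sum_union (by
        rw [disjoint_union_left]; exact ⟨hAG, hBG⟩),
      sum_union hAB]
    rw [sum_congr rfl (fun u hu => (hcards u).1 hu),
      sum_congr rfl (fun u hu => (hcards u).2.1 hu),
      sum_congr rfl (fun u hu => (hcards u).2.2 hu)]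
    simp [mul_comm]
  -- pairwise disjointness of Z
  have hZdisj : ∀ u ∈ S, ∀ v ∈ S, u ≠ v → Disjoint (Z u) (Z v) := by
    intro u hu v hv huv
    rw [disjoint_left]
    intro k hk hk'
    simp only [hZdef, mem_filter] at hk hk'
    exact hdisj u hu v hv huv k hk.1 ⟨hk.2, hk'.2⟩
  have hbi : (S.biUnion Z).card = ∑ u ∈ S, (Z u).card := card_biUnion hZdisj
  have hsubT : S.biUnion Z ⊆ (supp x) \ {m, l} := by
    intro k hk
    rw [mem_biUnion] at hk
    obtain ⟨u, -, hk⟩ := hk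
    exact (mem_filter.mp hk).1
  have hTcard : ((supp x) \ {m, l}).card = i - 2 := by
    rw [card_sdiff_of_subset (by
      intro k hk
      simp only [mem_insert, mem_singleton] at hk
      rcases hk with rfl | rfl
      · exact hm
      · exact hl), card_pair hml]
    have : (supp x).card = i := hxi
    omega
  have := card_le_card hsubT
  rw [hbi, hsum, hTcard] at this
  exact this
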